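/- Let f be a matrix Schur function with f(0) = α₀ and Schur transform f₁ with α₁ := f₁(0). Then f has the Taylor expansion f(z) = α₀ + z·ρ₀^R·α₁·ρ₀^L + O(z²) as z → 0, where ρ₀^R := (1-α₀α₀†)^{1/2} and ρ₀^L := (1-α₀†α₀)^{1/2}. -/

import Mathlib

/-!
Since `ρ₀^R` and `ρ₀^L` are invertible and `1 - α₀† f(z)` is invertible near `0`, the defining
formula of the Schur transform can be solved for `f`:
`f(z) - α₀ = z · G(z)` with `G(z) = ρ₀^R f₁(z) (ρ₀^L)⁻¹ (1 - α₀† f(z))`.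
`G` is holomorphic at `0` and `G(0) = ρ₀^R α₁ ρ₀^L` because `1 - α₀† α₀ = (ρ₀^L)²`,
so `f(z) - α₀ - z G(0) = z (G(z) - G(0)) = O(z²)`.
-/

open Matrix Asymptotics Filter
open scoped ComplexOrder Topology

attribute [local instance] Matrix.normedAddCommGroup Matrix.normedSpace

/-- The positive semidefinite square root of a positive semidefinite matrix
(as `Matrix.PosSemidef.sqrt` was defined in Mathlib, December 2024). -/
noncomputable def Matrix.PosSemidef.sqrt {n 𝕜 : Type*} [Fintype n] [DecidableEq n] [RCLike 𝕜]
    {A : Matrix n n 𝕜} (hA : A.PosSemidef) : Matrix n n 𝕜 :=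
  hA.1.eigenvectorUnitary.1 * diagonal ((↑) ∘ (√·) ∘ hA.1.eigenvalues) *
  (star hA.1.eigenvectorUnitary : Matrix n n 𝕜)

namespace Matrix.PosSemidef

variable {n 𝕜 : Type*} [Fintype n] [DecidableEq n] [RCLike 𝕜] {A : Matrix n n 𝕜}

theorem sqrt_mul_self (hA : A.PosSemidef) : hA.sqrt * hA.sqrt = A := by
  conv_rhs => rw [hA.1.spectral_theorem, Unitary.conjStarAlgAut_apply]
  have hU : (star hA.1.eigenvectorUnitary : Matrix n n 𝕜) * hA.1.eigenvectorUnitary.1 = 1 :=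
    Unitary.star_mul_self_of_mem hA.1.eigenvectorUnitary.2
  simp only [sqrt, Matrix.mul_assoc]
  rw [← Matrix.mul_assoc (star _) _ (diagonal _ * _), hU, Matrix.one_mul,
    ← Matrix.mul_assoc (diagonal _) (diagonal _), diagonal_mul_diagonal]
  congr 3
  funext i
  simp only [Function.comp_apply]
  rw [← RCLike.ofReal_mul, Real.mul_self_sqrt (hA.eigenvalues_nonneg i)]

theorem isUnit_sqrt (hA : A.PosSemidef) (hAu : IsUnit A) : IsUnit hA.sqrt :=
  isUnit_of_mul_isUnit_left (hA.sqrt_mul_self ▸ hAu)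

end Matrix.PosSemidef

theorem Matrix.sub_eq_smul_of_eq_inv_smul {K n : Type*} [Field K] [Fintype n] [DecidableEq n]
    {ρR ρL C a b F : Matrix n n K} {z : K} (hz : z ≠ 0) (hρR : IsUnit ρR) (hρL : IsUnit ρL)
    (hC : IsUnit C) (hF : F = z⁻¹ • (ρR⁻¹ * (b - a) * C⁻¹ * ρL)) :
    b - a = z • (ρR * F * ρL⁻¹ * C) := by
  rw [isUnit_iff_isUnit_det] at hρR hρL hC
  rw [hF, Matrix.mul_smul, Matrix.smul_mul, Matrix.smul_mul, smul_smul, mul_inv_cancel₀ hz,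
    one_smul]
  simp only [Matrix.mul_assoc, mul_nonsing_inv_cancel_left _ _ hρR, mul_nonsing_inv _ hρL,
    Matrix.mul_one, nonsing_inv_mul _ hC]

theorem ContinuousAt.eventually_isUnit {X 𝕜 n : Type*} [TopologicalSpace X] [NormedField 𝕜]
    [Fintype n] [DecidableEq n] {M : X → Matrix n n 𝕜} {x : X} (hM : ContinuousAt M x)
    (hx : IsUnit (M x)) : ∀ᶠ y in 𝓝 x, IsUnit (M y) := by
  have hdet : ContinuousAt (fun y => (M y).det) x :=
    continuous_id.matrix_det.continuousAt.comp hM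
  filter_upwards [hdet.eventually_ne ((isUnit_iff_isUnit_det _).mp hx).ne_zero] with y hy
  exact (isUnit_iff_isUnit_det _).mpr hy.isUnit

section Differentiability

variable {𝕜 : Type*} [NontriviallyNormedField 𝕜] {m n o : Type*} [Fintype n] {x : 𝕜}

theorem Matrix.differentiableAt_iff {M : 𝕜 → Matrix m n 𝕜} :
    DifferentiableAt 𝕜 M x ↔ ∀ i j, DifferentiableAt 𝕜 (fun y => M y i j) x :=
  differentiableAt_pi.trans (forall_congr' fun _ => differentiableAt_pi)

theorem DifferentiableAt.matrix_mul [Fintype o] {A : 𝕜 → Matrix m n 𝕜} {B : 𝕜 → Matrix n o 𝕜}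
    (hA : DifferentiableAt 𝕜 A x) (hB : DifferentiableAt 𝕜 B x) :
    DifferentiableAt 𝕜 (fun y => A y * B y) x := by
  rw [Matrix.differentiableAt_iff] at hA hB ⊢
  intro i j
  simp only [mul_apply]
  exact DifferentiableAt.fun_sum fun k _ => (hA i k).mul (hB k j)

end Differentiability

theorem Asymptotics.isBigO_sub_sub_smul_sq {𝕜 E : Type*} [NontriviallyNormedField 𝕜]
    [NormedAddCommGroup E] [NormedSpace 𝕜 E] {g G : 𝕜 → E} {a : E}
    (hG : DifferentiableAt 𝕜 G 0) (h : ∀ᶠ z in 𝓝 0, g z - a = z • G z) :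
    (fun z => g z - a - z • G 0) =O[𝓝 0] fun z => z ^ 2 := by
  have hlin : (fun z => G z - G 0) =O[𝓝 0] fun z => z := by
    simpa using hG.isBigO_sub
  refine ((isBigO_refl (fun z : 𝕜 => z) _).smul hlin).congr' ?_ ?_
  · filter_upwards [h] with z hz
    rw [smul_sub, hz]
  · exact Eventually.of_forall fun z => (sq z).symm

/-- Taylor expansion of a matrix Schur function:
`f(z) = α₀ + z ρ₀^R α₁ ρ₀^L + O(z²)` with `α₀ = f(0)`, `α₁ = f₁(0)`. -/
theorem schur_function_taylor (p : ℕ)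
    (f f₁ : ℂ → Matrix (Fin p) (Fin p) ℂ)
    (hf : AnalyticOnNhd ℂ f (Metric.ball 0 1))
    (hcontr : ∀ z ∈ Metric.ball (0:ℂ) 1,
      ((1 : Matrix (Fin p) (Fin p) ℂ) - (f z)ᴴ * f z).PosDef)
    (hR : ((1 : Matrix (Fin p) (Fin p) ℂ) - f 0 * (f 0)ᴴ).PosSemidef)
    (hL : ((1 : Matrix (Fin p) (Fin p) ℂ) - (f 0)ᴴ * f 0).PosSemidef)
    (hf₁ : AnalyticOnNhd ℂ f₁ (Metric.ball 0 1))
    (hdef : ∀ z ∈ Metric.ball (0:ℂ) 1, z ≠ 0 →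
      f₁ z = z⁻¹ • (hR.sqrt⁻¹ * (f z - f 0) * (1 - (f 0)ᴴ * f z)⁻¹ * hL.sqrt)) :
    (fun z : ℂ => f z - f 0 - z • (hR.sqrt * f₁ 0 * hL.sqrt))
      =O[nhds 0] fun z : ℂ => z ^ 2 := by
  have h0 : (0:ℂ) ∈ Metric.ball (0:ℂ) 1 := Metric.mem_ball_self one_pos
  set α := f 0
  set C : ℂ → Matrix (Fin p) (Fin p) ℂ := fun z => 1 - αᴴ * f z
  have hCd : DifferentiableAt ℂ C 0 := (differentiableAt_const _).sub
    ((differentiableAt_const _).matrix_mul (hf 0 h0).differentiableAt)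
  have hLu : IsUnit (1 - αᴴ * α) := (hcontr 0 h0).isUnit
  have hRu : IsUnit (1 - α * αᴴ) := by
    rwa [isUnit_iff_isUnit_det, det_one_sub_mul_comm, ← isUnit_iff_isUnit_det]
  have hCu : ∀ᶠ z in 𝓝 0, IsUnit (C z) := hCd.continuousAt.eventually_isUnit hLu
  set G : ℂ → Matrix (Fin p) (Fin p) ℂ := fun z => hR.sqrt * f₁ z * hL.sqrt⁻¹ * C z
  have hGd : DifferentiableAt ℂ G 0 :=
    (((differentiableAt_const _).matrix_mul (hf₁ 0 h0).differentiableAt).matrix_mul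
      (differentiableAt_const _)).matrix_mul hCd
  have hG0 : G 0 = hR.sqrt * f₁ 0 * hL.sqrt := by
    have hρL := (isUnit_iff_isUnit_det _).mp (hL.isUnit_sqrt hLu)
    have hC0 : C 0 = hL.sqrt * hL.sqrt := hL.sqrt_mul_self.symm
    simp only [G, hC0, Matrix.mul_assoc, nonsing_inv_mul_cancel_left _ _ hρL]
  have hfG : ∀ᶠ z in 𝓝 0, f z - α = z • G z := by
    filter_upwards [Metric.isOpen_ball.mem_nhds h0, hCu] with z hz hCz
    rcases eq_or_ne z 0 with rfl | hz0
    · simp [α]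
    · exact sub_eq_smul_of_eq_inv_smul hz0 (hR.isUnit_sqrt hRu) (hL.isUnit_sqrt hLu) hCz
        (hdef z hz hz0)
  simpa only [hG0] using isBigO_sub_sub_smul_sq hGd hfG
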